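/- Let λ₁, λ₂ ∈ ℝ and P = diag(λ₁, λ₂) ∈ ℝ²ˣ². Let u : ℝ² → ℝ² and g : ℝ² → ℝ be C^∞ with 𝓔u(x) = g(x) P for all x ∈ ℝ². Then λ₂ ∂₁₁g + λ₁ ∂₂₂g = 0 on ℝ². -/

import Mathlib

/-- The symmetrized gradient `𝓔u(x) = (Du(x) + Du(x)ᵀ)/2`, where `(Du)_{ij} = ∂_j u_i`. -/
noncomputable def symGrad {d : ℕ} (u : (Fin d → ℝ) → (Fin d → ℝ)) (x : Fin d → ℝ) :
    Matrix (Fin d) (Fin d) ℝ :=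
  fun i j => (fderiv ℝ u x (Pi.single j 1) i + fderiv ℝ u x (Pi.single i 1) j) / 2

/-- The second partial derivative `∂_a ∂_b f` of a scalar function on `ℝ^d`. -/
noncomputable def pderiv2 {d : ℕ} (f : (Fin d → ℝ) → ℝ) (a b : Fin d) (x : Fin d → ℝ) : ℝ :=
  fderiv ℝ (fun y => fderiv ℝ f y (Pi.single b 1)) x (Pi.single a 1)

section aux

variable {E : Type*} [NormedAddCommGroup E] [NormedSpace ℝ E]

lemma contDiff_D {f : E → ℝ} (hf : ContDiff ℝ (⊤ : ℕ∞) f) (v : E) :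
    ContDiff ℝ (⊤ : ℕ∞) (fun x => fderiv ℝ f x v) :=
  (ContinuousLinearMap.apply ℝ ℝ v).contDiff.comp (hf.fderiv_right (by simp))

lemma fderiv_D {f : E → ℝ} (hf : ContDiff ℝ (⊤ : ℕ∞) f) (v w : E) (x : E) :
    fderiv ℝ (fun y => fderiv ℝ f y w) x v = fderiv ℝ (fderiv ℝ f) x v w := by
  have h1 : DifferentiableAt ℝ (fderiv ℝ f) x :=
    ((hf.fderiv_right (m := 1) (WithTop.coe_le_coe.mpr le_top)).differentiable one_ne_zero) x
  have h2 := ((ContinuousLinearMap.apply ℝ ℝ w).hasFDerivAt.comp x h1.hasFDerivAt).fderiv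
  have : (fun y => fderiv ℝ f y w) = (ContinuousLinearMap.apply ℝ ℝ w) ∘ (fderiv ℝ f) := rfl
  rw [this, h2]
  rfl

lemma symm2 {f : E → ℝ} (hf : ContDiff ℝ (⊤ : ℕ∞) f) (v w : E) (x : E) :
    fderiv ℝ (fun y => fderiv ℝ f y w) x v = fderiv ℝ (fun y => fderiv ℝ f y v) x w := by
  rw [fderiv_D hf v w x, fderiv_D hf w v x]
  exact second_derivative_symmetric (fun y => (hf.differentiable (by simp) y).hasFDerivAt)
    (((hf.fderiv_right (m := 1) (WithTop.coe_le_coe.mpr le_top)).differentiable one_ne_zero x).hasFDerivAt) v w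

end aux

/-- If `𝓔u = g · diag(λ₁,λ₂)` with `u, g` smooth on `ℝ²`, then `g` satisfies
`λ₂ ∂₁₁ g + λ₁ ∂₂₂ g = 0` (a consequence of the 2D Saint-Venant identity
`curl curl (Eu) = 0`). -/
theorem elliptic_of_symGrad_eq (l1 l2 : ℝ)
    (u : (Fin 2 → ℝ) → (Fin 2 → ℝ)) (g : (Fin 2 → ℝ) → ℝ)
    (hu : ContDiff ℝ (⊤ : ℕ∞) u) (hg : ContDiff ℝ (⊤ : ℕ∞) g)
    (h : ∀ x, symGrad u x = g x • Matrix.diagonal ![l1, l2]) :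
    ∀ x, l2 * pderiv2 g 0 0 x + l1 * pderiv2 g 1 1 x = 0 := by
  intro x
  set e0 : Fin 2 → ℝ := Pi.single 0 1 with he0
  set e1 : Fin 2 → ℝ := Pi.single 1 1 with he1
  -- components of u
  set u0 : (Fin 2 → ℝ) → ℝ := fun y => u y 0 with hu0def
  set u1 : (Fin 2 → ℝ) → ℝ := fun y => u y 1 with hu1def
  have hdu := hu.differentiable (by simp)
  have hcomp : ∀ (i : Fin 2) (y : Fin 2 → ℝ) (v : Fin 2 → ℝ),
      fderiv ℝ (fun z => u z i) y v = fderiv ℝ u y v i := by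
    intro i y v
    have := ((ContinuousLinearMap.proj (R := ℝ) (φ := fun _ : Fin 2 => ℝ) i).hasFDerivAt.comp y
      (hdu y).hasFDerivAt).fderiv
    have heq : (fun z => u z i) = (ContinuousLinearMap.proj (R := ℝ) (φ := fun _ : Fin 2 => ℝ) i) ∘ u := rfl
    rw [heq, this]
    rfl
  have hsu0 : ContDiff ℝ (⊤ : ℕ∞) u0 :=
    (ContinuousLinearMap.proj (R := ℝ) (φ := fun _ : Fin 2 => ℝ) 0).contDiff.comp hu
  have hsu1 : ContDiff ℝ (⊤ : ℕ∞) u1 :=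
    (ContinuousLinearMap.proj (R := ℝ) (φ := fun _ : Fin 2 => ℝ) 1).contDiff.comp hu
  -- entry equalities
  have hA : ∀ y, fderiv ℝ u0 y e0 = g y * l1 := by
    intro y
    have := congrFun (congrFun (h y) 0) 0
    simp only [symGrad, Matrix.smul_apply, Matrix.diagonal_apply_eq, smul_eq_mul,
      Matrix.cons_val_zero, Matrix.cons_val_one, Matrix.head_cons] at this
    rw [hcomp 0 y e0]
    simp only [he0] at this ⊢
    linarith [this]
  have hB : ∀ y, fderiv ℝ u1 y e1 = g y * l2 := by
    intro y
    have := congrFun (congrFun (h y) 1) 1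
    simp only [symGrad, Matrix.smul_apply, Matrix.diagonal_apply_eq, smul_eq_mul,
      Matrix.cons_val_zero, Matrix.cons_val_one, Matrix.head_cons] at this
    rw [hcomp 1 y e1]
    simp only [he1] at this ⊢
    linarith [this]
  have hC : ∀ y, fderiv ℝ u0 y e1 = -(fderiv ℝ u1 y e0) := by
    intro y
    have := congrFun (congrFun (h y) 0) 1
    simp only [symGrad, Matrix.smul_apply, Matrix.diagonal_apply, smul_eq_mul] at this
    rw [hcomp 0 y e1, hcomp 1 y e0]
    simp only [he0, he1] at this ⊢
    simp only [if_neg (by decide : ¬ (0 : Fin 2) = 1), mul_zero] at this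
    linarith [this]
  -- p01 := ∂₁ u0, p10 := ∂₀ u1
  set p01 : (Fin 2 → ℝ) → ℝ := fun y => fderiv ℝ u0 y e1 with hp01
  set p10 : (Fin 2 → ℝ) → ℝ := fun y => fderiv ℝ u1 y e0 with hp10
  have hsp01 : ContDiff ℝ (⊤ : ℕ∞) p01 := contDiff_D hsu0 e1
  have hsp10 : ContDiff ℝ (⊤ : ℕ∞) p10 := contDiff_D hsu1 e0
  -- T1 = ∂₁∂₁∂₀u₀
  -- Step 1: inner swap on u0 : (fun y => fderiv (fun z => fderiv u0 z e0) y e1)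
  --        = fun y => fderiv p01 y e0
  have step1 : (fun y => fderiv ℝ (fun z => fderiv ℝ u0 z e0) y e1)
      = fun y => fderiv ℝ p01 y e0 := by
    funext y; exact symm2 hsu0 e1 e0 y
  -- T1 := ∂₁ (∂₀ p01) = ∂₀ (∂₁ p01)
  have step2 : fderiv ℝ (fun y => fderiv ℝ p01 y e0) x e1
      = fderiv ℝ (fun y => fderiv ℝ p01 y e1) x e0 := symm2 hsp01 e1 e0 x
  -- p01 = -p10
  have hCn : p01 = fun y => -(p10 y) := by funext y; exact hC y
  have step3 : (fun y => fderiv ℝ p01 y e1) = fun y => -(fderiv ℝ p10 y e1) := by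
    funext y
    rw [hCn, fderiv_fun_neg]
    simp
  -- T2 inner swap on u1
  have step4 : (fun y => fderiv ℝ (fun z => fderiv ℝ u1 z e1) y e0)
      = fun y => fderiv ℝ p10 y e1 := by
    funext y; exact symm2 hsu1 e0 e1 y
  -- now compute both sides via hA, hB
  have hAfun : (fun z => fderiv ℝ u0 z e0) = fun z => g z * l1 := funext hA
  have hBfun : (fun z => fderiv ℝ u1 z e1) = fun z => g z * l2 := funext hB
  have hdg := hg.differentiable (by simp)
  have hscale : ∀ (c : ℝ) (a b : Fin 2) (y : Fin 2 → ℝ),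
      fderiv ℝ (fun z => fderiv ℝ (fun w => g w * c) z (Pi.single b 1)) y (Pi.single a 1)
        = c * pderiv2 g a b y := by
    intro c a b y
    have h1 : (fun z => fderiv ℝ (fun w => g w * c) z (Pi.single b 1))
        = fun z => c * fderiv ℝ g z (Pi.single b 1) := by
      funext z
      rw [fderiv_mul_const (hdg z)]
      simp [mul_comm]
    rw [h1, fderiv_const_mul ((contDiff_D hg _).differentiable (by simp) y)]
    simp [pderiv2]
  -- T1 computation
  have T1eq : fderiv ℝ (fun y => fderiv ℝ (fun z => fderiv ℝ u0 z e0) y e1) x e1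
      = l1 * pderiv2 g 1 1 x := by
    rw [hAfun]; exact hscale l1 1 1 x
  have T2eq : fderiv ℝ (fun y => fderiv ℝ (fun z => fderiv ℝ u1 z e1) y e0) x e0
      = l2 * pderiv2 g 0 0 x := by
    rw [hBfun]; exact hscale l2 0 0 x
  -- Saint-Venant: T1 + T2 = 0
  have key : fderiv ℝ (fun y => fderiv ℝ (fun z => fderiv ℝ u0 z e0) y e1) x e1
      + fderiv ℝ (fun y => fderiv ℝ (fun z => fderiv ℝ u1 z e1) y e0) x e0 = 0 := by
    rw [step1, step4, step2, step3]
    rw [fderiv_fun_neg]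
    simp
  rw [← T1eq, ← T2eq]
  linarith [key]
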